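/- For every L > 0 there exists a unique real number x satisfying h(x − L) = h(x) − L·h′(x) (geometrically: the tangent line to the graph of h at (x, h(x)) passes through the point (x − L, h(x − L))), and this unique solution lies in the open interval (0, L). -/

import Mathlib

/-- The hill function `h(x) = arccos(tanh x)`. -/
noncomputable def hill (x : ℝ) : ℝ := Real.arccos (Real.tanh x)

/-- The derivative of the hill function: `h'(x) = -1/cosh x`. -/
noncomputable def hill' (x : ℝ) : ℝ := -1 / Real.cosh x

/-!
Put `g(x) = h(x - L) - (h(x) - L h'(x))`. As `h' = -1/cosh` is even and strictly increasing
in `|x|`, the mean value theorem on `[x - L, x]` shows that at a zero `x` of `g` the chord slope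
`h'(x)` is attained only at `-x`, so `x - L < -x < x`, i.e. `0 < x < L/2`. On `(0, L/2)` the map
`g` is strictly increasing, since there `h'(x - L) > h'(x)` and `h'` increases. Finally the mean
value theorem on `[0, L]` gives `g(0) < 0 < g(L)`, and the intermediate value theorem a zero.
-/

open Real Set

namespace Real

theorem one_sub_tanh_sq (x : ℝ) : 1 - tanh x ^ 2 = 1 / cosh x ^ 2 := by
  have := cosh_sq x
  rw [tanh_eq_sinh_div_cosh]
  field_simp
  linarith

theorem hasDerivAt_tanh (x : ℝ) : HasDerivAt tanh (1 / cosh x ^ 2) x := by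
  have h := (hasDerivAt_sinh x).div (hasDerivAt_cosh x) (cosh_pos x).ne'
  rw [show sinh / cosh = tanh from funext fun y => (tanh_eq_sinh_div_cosh y).symm] at h
  refine h.congr_deriv ?_
  have := cosh_sq x
  field_simp
  linarith

end Real

theorem hasDerivAt_hill (x : ℝ) : HasDerivAt hill (hill' x) x := by
  have h := (hasDerivAt_arccos (neg_one_lt_tanh x).ne' (tanh_lt_one x).ne).comp x
    (hasDerivAt_tanh x)
  refine h.congr_deriv ?_
  have := cosh_pos x
  rw [one_sub_tanh_sq, ← one_div_pow, sqrt_sq (by positivity), hill']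
  field_simp

theorem continuous_hill : Continuous hill :=
  continuous_iff_continuousAt.2 fun x => (hasDerivAt_hill x).continuousAt

theorem continuous_hill' : Continuous hill' :=
  continuous_const.div continuous_cosh fun x => (cosh_pos x).ne'

theorem hill_neg (x : ℝ) : hill (-x) = π - hill x := by
  rw [hill, hill, tanh_neg, arccos_neg]

theorem hill_zero : hill 0 = π / 2 := by
  rw [hill, tanh_zero, arccos_zero]

theorem hill'_lt_hill'_iff {x y : ℝ} : hill' x < hill' y ↔ |x| < |y| := by
  rw [hill', hill', neg_div, neg_div, neg_lt_neg_iff,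
    one_div_lt_one_div (cosh_pos y) (cosh_pos x), cosh_lt_cosh]

theorem hill'_eq_hill'_iff {x y : ℝ} : hill' x = hill' y ↔ |x| = |y| := by
  simp only [le_antisymm_iff, ← not_lt, hill'_lt_hill'_iff]

theorem strictMonoOn_hill' : StrictMonoOn hill' (Ici 0) := fun x hx y hy hxy =>
  hill'_lt_hill'_iff.2 (by rwa [abs_of_nonneg hx, abs_of_nonneg hy])

theorem exists_hill_sub_eq_mul {a b : ℝ} (hab : a < b) :
    ∃ c ∈ Ioo a b, hill b - hill a = (b - a) * hill' c := by
  obtain ⟨c, hc, hslope⟩ := exists_hasDerivAt_eq_slope hill hill' hab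
    continuous_hill.continuousOn fun x _ => hasDerivAt_hill x
  refine ⟨c, hc, ?_⟩
  rw [hslope, mul_div_cancel₀ _ (sub_pos.2 hab).ne']

noncomputable def hillTangentGap (L x : ℝ) : ℝ := hill (x - L) - (hill x - L * hill' x)

section TangentGap

variable {L : ℝ}

theorem hillTangentGap_eq_zero_iff {x : ℝ} :
    hillTangentGap L x = 0 ↔ hill (x - L) = hill x - L * hill' x :=
  sub_eq_zero

theorem continuous_hillTangentGap (L : ℝ) : Continuous (hillTangentGap L) :=
  (continuous_hill.comp (continuous_sub_right L)).sub
    (continuous_hill.sub (continuous_const.mul continuous_hill'))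

theorem hillTangentGap_zero_neg (hL : 0 < L) : hillTangentGap L 0 < 0 := by
  obtain ⟨c, hc, hchord⟩ := exists_hill_sub_eq_mul hL
  have hslope : L * hill' 0 < L * hill' c :=
    mul_lt_mul_of_pos_left (strictMonoOn_hill' self_mem_Ici hc.1.le hc.1) hL
  have := hill_neg L
  simp only [hillTangentGap, zero_sub, sub_zero, hill_zero] at hchord this ⊢
  linarith

theorem hillTangentGap_self_pos (hL : 0 < L) : 0 < hillTangentGap L L := by
  obtain ⟨c, hc, hchord⟩ := exists_hill_sub_eq_mul hL
  have hslope : L * hill' c < L * hill' L :=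
    mul_lt_mul_of_pos_left (strictMonoOn_hill' hc.1.le hL.le hc.2) hL
  simp only [hillTangentGap, sub_self, sub_zero] at hchord ⊢
  linarith

theorem mem_Ioo_of_hillTangentGap_eq_zero (hL : 0 < L) {x : ℝ} (hx : hillTangentGap L x = 0) :
    x ∈ Ioo 0 (L / 2) := by
  obtain ⟨c, ⟨hc₁, hc₂⟩, hchord⟩ := exists_hill_sub_eq_mul (sub_lt_self x hL)
  rw [hillTangentGap_eq_zero_iff] at hx
  have hslope : hill' c = hill' x := by
    refine mul_left_cancel₀ hL.ne' ?_
    rw [sub_sub_cancel] at hchord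
    linarith
  have hc : c = -x := (abs_eq_abs.1 (hill'_eq_hill'_iff.1 hslope)).resolve_left hc₂.ne
  subst hc
  constructor <;> linarith

theorem strictMonoOn_hillTangentGap (hL : 0 < L) :
    StrictMonoOn (hillTangentGap L) (Ioo 0 (L / 2)) := by
  have hchord : StrictMonoOn (fun x => hill (x - L) - hill x) (Ioo 0 (L / 2)) := by
    refine strictMonoOn_of_hasDerivWithinAt_pos (convex_Ioo _ _)
      ((continuous_hill.comp (continuous_sub_right L)).sub continuous_hill).continuousOn
      (fun x _ => (((hasDerivAt_hill (x - L)).comp_sub_const x L).sub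
        (hasDerivAt_hill x)).hasDerivWithinAt) fun x hx => ?_
    rw [interior_Ioo] at hx
    rw [sub_pos, hill'_lt_hill'_iff, abs_of_pos hx.1, abs_of_neg (by linarith [hx.2])]
    linarith [hx.2]
  have htangent : StrictMonoOn (fun x => L * hill' x) (Ioo 0 (L / 2)) := fun x hx y hy hxy =>
    mul_lt_mul_of_pos_left (strictMonoOn_hill' hx.1.le hy.1.le hxy) hL
  convert hchord.add htangent using 1
  funext x
  rw [hillTangentGap]
  ring

end TangentGap

/-- For every `L > 0` there is a unique real `x` such that the tangent line to the
graph of the hill function at `(x, h x)` passes through `(x - L, h (x - L))`, i.e.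
`h (x - L) = h x - L * h' x`; moreover this solution lies in `(0, L)`. -/
theorem hill_tangent_chord_existsUnique {L : ℝ} (hL : 0 < L) :
    ∃ x : ℝ, (hill (x - L) = hill x - L * hill' x) ∧ x ∈ Set.Ioo 0 L ∧
      ∀ y : ℝ, hill (y - L) = hill y - L * hill' y → y = x := by
  simp_rw [← hillTangentGap_eq_zero_iff]
  obtain ⟨x, hx, hx₀⟩ := intermediate_value_Ioo hL.le (continuous_hillTangentGap L).continuousOn
    ⟨hillTangentGap_zero_neg hL, hillTangentGap_self_pos hL⟩
  refine ⟨x, hx₀, hx, fun y hy₀ => ?_⟩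
  exact (strictMonoOn_hillTangentGap hL).injOn (mem_Ioo_of_hillTangentGap_eq_zero hL hy₀)
    (mem_Ioo_of_hillTangentGap_eq_zero hL hx₀) (hy₀.trans hx₀.symm)
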